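/- Let X and Y be symmetric real n × n matrices whose second smallest eigenvalues λ₂(X), λ₂(Y) are simple and at distance at least δ > 0 from all other eigenvalues of X and Y respectively. Let x and y be unit eigenvectors corresponding to λ₂(X) and λ₂(Y). Then min over β ∈ {±1} of ‖x + βy‖ is at most 2‖X − Y‖/δ. -/

import Mathlib

noncomputable def e2 {n : ℕ} (v : Fin n → ℝ) : ℝ := Real.sqrt (∑ i, (v i)^2)

/-- The ℓ²→ℓ² operator norm of a matrix. -/
noncomputable def opNorm {k m : ℕ} (B : Matrix (Fin k) (Fin m) ℝ) : ℝ :=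
  sSup {c : ℝ | ∃ x : Fin m → ℝ, e2 x ≤ 1 ∧ c = e2 (B.mulVec x)}

/-- The ℓ∞→ℓ² operator norm of a matrix. -/
noncomputable def normInfTwo {k m : ℕ} (B : Matrix (Fin k) (Fin m) ℝ) : ℝ :=
  sSup {c : ℝ | ∃ x : Fin m → ℝ, (∀ j, |x j| ≤ 1) ∧ c = e2 (B.mulVec x)}

/-!
Write `y` in the orthonormal eigenbasis `(pᵢ)` of `X`. As `x = ±p₁`, the quantity `1 - (x ⬝ y)²`
is the mass of `y` off `p₁`. Assume `ν₁ ≤ μ₁` (the other case is symmetric). Then every `μᵢ` with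
`i ≥ 2` lies at least `δ` above `ν₁`, and comparing `X y` with `Y y = ν₁ y` bounds the mass of `y`
on these `pᵢ` by `(‖X - Y‖ / δ)²`. The spectra need not be separated across `p₀`, so the
component along `p₀` is controlled through the bottom eigenvector `q₀` of `Y`: it is orthogonal
to `y`, so by Bessel `(p₀ ⬝ y)²` is at most the mass of `q₀` off `p₀`, and this is again at most
`(‖X - Y‖ / δ)²` because every `μᵢ` with `i ≥ 1` lies at least `δ` above `ν₀`. Finally
`min ‖x ± y‖² = 2 - 2 |x ⬝ y| ≤ 2 (1 - (x ⬝ y)²)`.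
-/

section DavisKahan

open Matrix Finset

lemma e2_nonneg {n : ℕ} (v : Fin n → ℝ) : 0 ≤ e2 v := Real.sqrt_nonneg _

lemma e2_sq {n : ℕ} (v : Fin n → ℝ) : e2 v ^ 2 = v ⬝ᵥ v := by
  rw [e2, Real.sq_sqrt (by positivity), dotProduct]
  simp only [sq]

lemma e2_eq_norm {n : ℕ} (v : Fin n → ℝ) : e2 v = ‖(EuclideanSpace.equiv (Fin n) ℝ).symm v‖ := by
  rw [EuclideanSpace.norm_eq, e2]
  simp

attribute [local instance] Matrix.instL2OpNormedAddCommGroup in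
lemma e2_mulVec_le_opNorm {k m : ℕ} (B : Matrix (Fin k) (Fin m) ℝ) {v : Fin m → ℝ}
    (hv : e2 v ≤ 1) : e2 (B *ᵥ v) ≤ opNorm B := by
  refine le_csSup ⟨‖B‖, ?_⟩ ⟨v, hv, rfl⟩
  rintro _ ⟨w, hw, rfl⟩
  rw [e2_eq_norm] at hw ⊢
  calc _ ≤ ‖B‖ * ‖(EuclideanSpace.equiv (Fin m) ℝ).symm w‖ := B.l2_opNorm_mulVec _
    _ ≤ ‖B‖ := mul_le_of_le_one_right (norm_nonneg _) hw

lemma opNorm_nonneg {k m : ℕ} (B : Matrix (Fin k) (Fin m) ℝ) : 0 ≤ opNorm B :=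
  (e2_nonneg _).trans (e2_mulVec_le_opNorm B (v := 0) (by simp [e2]))

lemma e2_neg {n : ℕ} (v : Fin n → ℝ) : e2 (-v) = e2 v := by simp [e2]

lemma opNorm_neg {k m : ℕ} (B : Matrix (Fin k) (Fin m) ℝ) : opNorm (-B) = opNorm B := by
  simp [opNorm, neg_mulVec, e2_neg]

lemma opNorm_sub_comm {k m : ℕ} (A B : Matrix (Fin k) (Fin m) ℝ) :
    opNorm (A - B) = opNorm (B - A) := by
  rw [← opNorm_neg, neg_sub]

section Orthogonal
variable {ι : Type*} [Fintype ι] [DecidableEq ι] {P : Matrix ι ι ℝ}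

lemma transpose_mulVec_dotProduct_transpose_mulVec (hP : P * Pᵀ = 1) (u v : ι → ℝ) :
    (Pᵀ *ᵥ u) ⬝ᵥ (Pᵀ *ᵥ v) = u ⬝ᵥ v := by
  rw [mulVec_transpose, dotProduct_mulVec, vecMul_vecMul, hP, vecMul_one]

lemma transpose_mulVec_conj_diagonal_apply (hP : P * Pᵀ = 1) (μ v : ι → ℝ) (i : ι) :
    (Pᵀ *ᵥ ((P * diagonal μ * Pᵀ) *ᵥ v)) i = μ i * (Pᵀ *ᵥ v) i := by
  rw [mulVec_mulVec, ← Matrix.mul_assoc, ← Matrix.mul_assoc, mul_eq_one_comm.mp hP,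
    Matrix.one_mul, ← mulVec_mulVec, mulVec_diagonal]

lemma transpose_mulVec_apply_eq_zero (hP : P * Pᵀ = 1) {μ v : ι → ℝ} {a : ℝ}
    (hv : (P * diagonal μ * Pᵀ) *ᵥ v = a • v) {i : ι} (hi : μ i ≠ a) : (Pᵀ *ᵥ v) i = 0 := by
  have h := transpose_mulVec_conj_diagonal_apply hP μ v i
  rw [hv, mulVec_smul, Pi.smul_apply, smul_eq_mul] at h
  exact (mul_eq_mul_right_iff.mp h.symm).resolve_left hi

lemma conj_diagonal_mulVec_single (hP : P * Pᵀ = 1) (μ : ι → ℝ) (i : ι) :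
    (P * diagonal μ * Pᵀ) *ᵥ (P *ᵥ Pi.single i 1) = μ i • (P *ᵥ Pi.single i 1) := by
  rw [mulVec_mulVec, Matrix.mul_assoc, mul_eq_one_comm.mp hP, Matrix.mul_one, ← mulVec_mulVec,
    diagonal_mulVec_single, ← mulVec_smul, ← Pi.single_smul, smul_eq_mul]

lemma transpose_mulVec_mulVec_single (hP : P * Pᵀ = 1) (i : ι) :
    Pᵀ *ᵥ (P *ᵥ Pi.single i 1) = Pi.single i 1 := by
  rw [mulVec_mulVec, mul_eq_one_comm.mp hP, one_mulVec]

lemma sq_add_sq_le_one_of_orthonormal {u v : ι → ℝ} (hu : u ⬝ᵥ u = 1) (hv : v ⬝ᵥ v = 1)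
    (huv : u ⬝ᵥ v = 0) (k : ι) : u k ^ 2 + v k ^ 2 ≤ 1 := by
  have h := dotProduct_self_star_nonneg (Pi.single k 1 - u k • u - v k • v)
  simp only [star_trivial, sub_dotProduct, dotProduct_sub, smul_dotProduct, dotProduct_smul,
    single_dotProduct, dotProduct_single, hu, hv, huv, dotProduct_comm v u, Pi.sub_apply,
    Pi.smul_apply, smul_eq_mul, Pi.single_eq_same] at h
  linarith

lemma sq_dotProduct_eq_of_simple (hP : P * Pᵀ = 1) {μ : ι → ℝ} {k : ι}
    (hk : ∀ i ≠ k, μ i ≠ μ k) {x : ι → ℝ} (hx : (P * diagonal μ * Pᵀ) *ᵥ x = μ k • x)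
    (hxx : x ⬝ᵥ x = 1) (y : ι → ℝ) : (x ⬝ᵥ y) ^ 2 = (Pᵀ *ᵥ y) k ^ 2 := by
  have hξ : Pᵀ *ᵥ x = Pi.single k ((Pᵀ *ᵥ x) k) := by
    funext i
    rcases eq_or_ne i k with rfl | hi
    · simp
    · rw [Pi.single_eq_of_ne hi, transpose_mulVec_apply_eq_zero hP hx (hk i hi)]
  have hξk : (Pᵀ *ᵥ x) k ^ 2 = 1 := by
    rw [← hxx, ← transpose_mulVec_dotProduct_transpose_mulVec hP x x, hξ, single_dotProduct,
      Pi.single_eq_same, sq]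
  rw [← transpose_mulVec_dotProduct_transpose_mulVec hP, hξ, single_dotProduct, mul_pow, hξk,
    one_mul]

lemma dotProduct_mulVec_single_eq_zero (hP : P * Pᵀ = 1) {μ : ι → ℝ} {y : ι → ℝ} {a : ℝ}
    (hy : (P * diagonal μ * Pᵀ) *ᵥ y = a • y) {k : ι} (hk : μ k ≠ a) :
    y ⬝ᵥ (P *ᵥ Pi.single k 1) = 0 := by
  rw [← transpose_mulVec_dotProduct_transpose_mulVec hP, transpose_mulVec_mulVec_single hP,
    dotProduct_single, transpose_mulVec_apply_eq_zero hP hy hk, zero_mul]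

lemma mulVec_single_dotProduct_self (hP : P * Pᵀ = 1) (k : ι) :
    (P *ᵥ Pi.single k 1) ⬝ᵥ (P *ᵥ Pi.single k 1) = 1 := by
  rw [← transpose_mulVec_dotProduct_transpose_mulVec hP, transpose_mulVec_mulVec_single hP,
    single_dotProduct, Pi.single_eq_same, one_mul]

lemma sum_sq_transpose_mulVec (hP : P * Pᵀ = 1) (v : ι → ℝ) :
    ∑ i, (Pᵀ *ᵥ v) i ^ 2 = v ⬝ᵥ v := by
  rw [← transpose_mulVec_dotProduct_transpose_mulVec hP, dotProduct]
  simp only [sq]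

end Orthogonal

lemma sum_sq_transpose_mulVec_le_of_gap {n : ℕ} {P : Matrix (Fin n) (Fin n) ℝ} (hP : P * Pᵀ = 1)
    (μ : Fin n → ℝ) (Y : Matrix (Fin n) (Fin n) ℝ) {v : Fin n → ℝ} {a : ℝ} (hv : Y *ᵥ v = a • v)
    (hv1 : e2 v ≤ 1) {δ : ℝ} (hδ : 0 < δ) {S : Finset (Fin n)} (hS : ∀ i ∈ S, δ ≤ μ i - a) :
    ∑ i ∈ S, (Pᵀ *ᵥ v) i ^ 2 ≤ (opNorm (P * diagonal μ * Pᵀ - Y) / δ) ^ 2 := by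
  set c := Pᵀ *ᵥ v
  set w := (P * diagonal μ * Pᵀ - Y) *ᵥ v with hw_def
  have hw : ∀ i, (Pᵀ *ᵥ w) i = (μ i - a) * c i := fun i => by
    rw [hw_def, sub_mulVec, mulVec_sub, hv, mulVec_smul, Pi.sub_apply,
      transpose_mulVec_conj_diagonal_apply hP, Pi.smul_apply, smul_eq_mul, sub_mul]
  rw [div_pow, le_div_iff₀ (by positivity), mul_comm, mul_sum]
  calc ∑ i ∈ S, δ ^ 2 * c i ^ 2
      ≤ ∑ i ∈ S, (Pᵀ *ᵥ w) i ^ 2 := sum_le_sum fun i hi => by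
        rw [hw, mul_pow]
        gcongr
        exact hS i hi
    _ ≤ ∑ i, (Pᵀ *ᵥ w) i ^ 2 :=
        sum_le_sum_of_subset_of_nonneg (subset_univ S) fun i _ _ => sq_nonneg _
    _ = e2 w ^ 2 := by rw [e2_sq, sum_sq_transpose_mulVec hP]
    _ ≤ opNorm (P * diagonal μ * Pᵀ - Y) ^ 2 := by
        gcongr
        exacts [e2_nonneg w, e2_mulVec_le_opNorm _ hv1]

lemma sq_transpose_mulVec_apply_le_of_gap {n : ℕ} {P Q : Matrix (Fin n) (Fin n) ℝ}
    (hP : P * Pᵀ = 1) (hQ : Q * Qᵀ = 1) {μ ν : Fin n → ℝ} {y : Fin n → ℝ} {a : ℝ}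
    (hy : (Q * diagonal ν * Qᵀ) *ᵥ y = a • y) (hyy : y ⬝ᵥ y = 1) {k : Fin n} (hk : ν k ≠ a)
    {δ : ℝ} (hδ : 0 < δ) (hgap : ∀ i ≠ k, δ ≤ μ i - ν k) :
    (Pᵀ *ᵥ y) k ^ 2 ≤ (opNorm (P * diagonal μ * Pᵀ - Q * diagonal ν * Qᵀ) / δ) ^ 2 := by
  set q := Q *ᵥ Pi.single k 1
  have hqq : q ⬝ᵥ q = 1 := mulVec_single_dotProduct_self hQ k
  have hbessel := sq_add_sq_le_one_of_orthonormal
    ((transpose_mulVec_dotProduct_transpose_mulVec hP y y).trans hyy)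
    ((transpose_mulVec_dotProduct_transpose_mulVec hP q q).trans hqq)
    ((transpose_mulVec_dotProduct_transpose_mulVec hP y q).trans
      (dotProduct_mulVec_single_eq_zero hQ hy hk)) k
  have hq_gap := sum_sq_transpose_mulVec_le_of_gap hP μ (Q * diagonal ν * Qᵀ)
    (conj_diagonal_mulVec_single hQ ν k) (by rw [← sq_le_one_iff₀ (e2_nonneg q), e2_sq, hqq])
    hδ (S := univ.erase k) fun i hi => hgap i (ne_of_mem_erase hi)
  have hq_split := add_sum_erase univ (fun i => (Pᵀ *ᵥ q) i ^ 2) (mem_univ k)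
  rw [sum_sq_transpose_mulVec hP, hqq] at hq_split
  linarith

lemma sum_univ_eq_add_add_sum_filter_two_le {M : Type*} [AddCommMonoid M] {n : ℕ} (hn : 2 ≤ n)
    (f : Fin n → M) :
    ∑ i, f i = f ⟨0, zero_lt_two.trans_le hn⟩ + f ⟨1, one_lt_two.trans_le hn⟩ +
      ∑ i ∈ univ.filter (fun i : Fin n => 2 ≤ (i : ℕ)), f i := by
  rw [← sum_filter_not_add_sum_filter univ (fun i : Fin n => 2 ≤ (i : ℕ))]
  congr 1
  have : univ.filter (fun i : Fin n => ¬ 2 ≤ (i : ℕ)) =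
      {⟨0, zero_lt_two.trans_le hn⟩, ⟨1, one_lt_two.trans_le hn⟩} := by
    ext ⟨i, hi⟩
    simp only [mem_filter, mem_univ, true_and, mem_insert, mem_singleton, Fin.mk.injEq]
    omega
  rw [this, sum_pair (by simp)]

lemma one_sub_dotProduct_sq_le_of_le {n : ℕ} (hn : 2 ≤ n) {X Y P Q : Matrix (Fin n) (Fin n) ℝ}
    {μ ν : Fin n → ℝ} {δ : ℝ} (hδ : 0 < δ) (hP : P * Pᵀ = 1) (hQ : Q * Qᵀ = 1)
    (hX : X = P * diagonal μ * Pᵀ) (hY : Y = Q * diagonal ν * Qᵀ) (hμmono : Monotone μ)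
    (hμgap1 : μ ⟨0, zero_lt_two.trans_le hn⟩ ≤ μ ⟨1, one_lt_two.trans_le hn⟩ - δ)
    (hμgap2 : ∀ i : Fin n, 2 ≤ (i : ℕ) → μ ⟨1, one_lt_two.trans_le hn⟩ + δ ≤ μ i)
    (hνgap1 : ν ⟨0, zero_lt_two.trans_le hn⟩ ≤ ν ⟨1, one_lt_two.trans_le hn⟩ - δ) {x y : Fin n → ℝ}
    (hx : X *ᵥ x = μ ⟨1, one_lt_two.trans_le hn⟩ • x) (hxnorm : e2 x = 1)
    (hy : Y *ᵥ y = ν ⟨1, one_lt_two.trans_le hn⟩ • y) (hynorm : e2 y = 1)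
    (hle : ν ⟨1, one_lt_two.trans_le hn⟩ ≤ μ ⟨1, one_lt_two.trans_le hn⟩) :
    1 - (x ⬝ᵥ y) ^ 2 ≤ 2 * (opNorm (X - Y) / δ) ^ 2 := by
  subst hX hY
  set i₀ : Fin n := ⟨0, zero_lt_two.trans_le hn⟩
  set i₁ : Fin n := ⟨1, one_lt_two.trans_le hn⟩
  have hxx : x ⬝ᵥ x = 1 := by rw [← e2_sq, hxnorm, one_pow]
  have hyy : y ⬝ᵥ y = 1 := by rw [← e2_sq, hynorm, one_pow]
  have hμsimple : ∀ i ≠ i₁, μ i ≠ μ i₁ := by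
    rintro ⟨_ | _ | k, hk⟩ hi
    · exact (by linarith : μ i₀ < μ i₁).ne
    · exact absurd rfl hi
    · exact (by linarith [hμgap2 ⟨k + 2, hk⟩ (by simp)] : μ i₁ < _).ne'
  have hy₀ := sq_transpose_mulVec_apply_le_of_gap (μ := μ) hP hQ hy hyy (k := i₀)
    (by linarith) hδ fun i hi => by
      have : i₁ ≤ i := by
        obtain ⟨_ | k, hk⟩ := i
        · exact absurd rfl hi
        · exact Fin.mk_le_mk.mpr (by omega)
      linarith [hμmono this]
  have hy_gap := sum_sq_transpose_mulVec_le_of_gap hP μ (Q * diagonal ν * Qᵀ) hy hynorm.le hδ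
    (S := univ.filter (fun i : Fin n => 2 ≤ (i : ℕ))) fun i hi => by
      linarith [hμgap2 i (mem_filter.mp hi).2]
  have hy_split := sum_univ_eq_add_add_sum_filter_two_le hn fun i => (Pᵀ *ᵥ y) i ^ 2
  have hxy := sq_dotProduct_eq_of_simple hP hμsimple hx hxx y
  rw [sum_sq_transpose_mulVec hP, hyy] at hy_split
  linarith

lemma min_e2_add_e2_sub_le {n : ℕ} {x y : Fin n → ℝ} (hx : e2 x = 1) (hy : e2 y = 1) {r : ℝ}
    (hr : 0 ≤ r) (h : 1 - (x ⬝ᵥ y) ^ 2 ≤ 2 * r ^ 2) : min (e2 (x + y)) (e2 (x - y)) ≤ 2 * r := by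
  have hxx : x ⬝ᵥ x = 1 := by rw [← e2_sq, hx, one_pow]
  have hyy : y ⬝ᵥ y = 1 := by rw [← e2_sq, hy, one_pow]
  have hadd : e2 (x + y) ^ 2 = 2 + 2 * (x ⬝ᵥ y) := by
    rw [e2_sq, add_dotProduct, dotProduct_add, dotProduct_add, hxx, hyy, dotProduct_comm y x]
    ring
  have hsub : e2 (x - y) ^ 2 = 2 - 2 * (x ⬝ᵥ y) := by
    rw [e2_sq, sub_dotProduct, dotProduct_sub, dotProduct_sub, hxx, hyy, dotProduct_comm y x]
    ring
  rcases le_total 0 (x ⬝ᵥ y) with hc | hc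
  · refine (min_le_right _ _).trans ((sq_le_sq₀ (e2_nonneg _) (by positivity)).mp ?_)
    nlinarith [sq_nonneg (e2 (x + y))]
  · refine (min_le_left _ _).trans ((sq_le_sq₀ (e2_nonneg _) (by positivity)).mp ?_)
    nlinarith [sq_nonneg (e2 (x - y))]

end DavisKahan

open Matrix in
/-- Simple version of the Davis–Kahan theorem. The symmetric matrices `X` and `Y` are given
through their orthogonal diagonalizations with sorted eigenvalue sequences `μ`, `ν`; the second
smallest eigenvalues `μ 1`, `ν 1` are simple and δ-separated from the rest of the spectrum. -/
theorem stmt10 (n : ℕ) (hn : 2 ≤ n) (X Y P Q : Matrix (Fin n) (Fin n) ℝ)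
    (μ ν : Fin n → ℝ) (δ : ℝ) (hδ : 0 < δ)
    (hP : P * Pᵀ = 1) (hQ : Q * Qᵀ = 1)
    (hX : X = P * Matrix.diagonal μ * Pᵀ)
    (hY : Y = Q * Matrix.diagonal ν * Qᵀ)
    (hμmono : Monotone μ) (hνmono : Monotone ν)
    (hμgap1 : μ ⟨0, by omega⟩ ≤ μ ⟨1, by omega⟩ - δ)
    (hμgap2 : ∀ i : Fin n, 2 ≤ (i : ℕ) → μ ⟨1, by omega⟩ + δ ≤ μ i)
    (hνgap1 : ν ⟨0, by omega⟩ ≤ ν ⟨1, by omega⟩ - δ)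
    (hνgap2 : ∀ i : Fin n, 2 ≤ (i : ℕ) → ν ⟨1, by omega⟩ + δ ≤ ν i)
    (x y : Fin n → ℝ)
    (hx : X.mulVec x = μ ⟨1, by omega⟩ • x) (hxnorm : e2 x = 1)
    (hy : Y.mulVec y = ν ⟨1, by omega⟩ • y) (hynorm : e2 y = 1) :
    min (e2 (x + y)) (e2 (x - y)) ≤ 2 * opNorm (X - Y) / δ := by
  have hsin : 1 - (x ⬝ᵥ y) ^ 2 ≤ 2 * (opNorm (X - Y) / δ) ^ 2 := by
    rcases le_total (ν ⟨1, by omega⟩) (μ ⟨1, by omega⟩) with h | h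
    · exact one_sub_dotProduct_sq_le_of_le hn hδ hP hQ hX hY hμmono hμgap1 hμgap2 hνgap1
        hx hxnorm hy hynorm h
    · simpa only [dotProduct_comm y x, opNorm_sub_comm Y X] using
        one_sub_dotProduct_sq_le_of_le hn hδ hQ hP hY hX hνmono hνgap1 hνgap2 hμgap1
          hy hynorm hx hxnorm h
  rw [mul_div_assoc]
  exact min_e2_add_e2_sub_le hxnorm hynorm (div_nonneg (opNorm_nonneg _) hδ.le) hsin
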